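/- If a first-order formula φ(x, w̄ₙ) is invariant with respect to asimulations, then φ is logically equivalent to a standard x-translation of an intuitionistic predicate formula. -/

import Mathlib

namespace IPC

/-- The classical vocabulary Σ: binary R, binary E, and for each intuitionistic
`n`-ary predicate letter indexed by `m` a classical `(n+1)`-ary letter `P n m`. -/
inductive Sym : Type
  | R : Sym
  | E : Sym
  | P : ℕ → ℕ → Sym
  deriving DecidableEq

def Sym.arity : Sym → ℕ
  | .R => 2
  | .E => 2
  | .P n _ => n + 1

theorem Sym.arity_pos (s : Sym) : 0 < s.arity := by
  cases s <;> simp [Sym.arity]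

/-- A first-order model for the vocabulary Σ. -/
structure Model : Type 1 where
  D : Type
  ne : Nonempty D
  rel : ∀ s : Sym, (Fin s.arity → D) → Prop

/-- First-order formulas (with identity) over Σ; variables are natural numbers. -/
inductive Fml : Type
  | atom (s : Sym) (args : Fin s.arity → ℕ)
  | eq (v w : ℕ)
  | fls
  | neg (φ : Fml)
  | conj (φ ψ : Fml)
  | disj (φ ψ : Fml)
  | impl (φ ψ : Fml)
  | all (v : ℕ) (φ : Fml)
  | ex (v : ℕ) (φ : Fml)

/-- Tarskian satisfaction relative to a variable assignment. -/
def Fml.eval (M : Model) : Fml → (ℕ → M.D) → Prop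
  | .atom s args, f => M.rel s (fun i => f (args i))
  | .eq v w, f => f v = f w
  | .fls, _ => False
  | .neg φ, f => ¬ φ.eval M f
  | .conj φ ψ, f => φ.eval M f ∧ ψ.eval M f
  | .disj φ ψ, f => φ.eval M f ∨ ψ.eval M f
  | .impl φ ψ, f => φ.eval M f → ψ.eval M f
  | .all v φ, f => ∀ d : M.D, φ.eval M (Function.update f v d)
  | .ex v φ, f => ∃ d : M.D, φ.eval M (Function.update f v d)

/-- Degree: maximal nesting of quantifiers. -/
def Fml.deg : Fml → ℕ
  | .atom _ _ => 0
  | .eq _ _ => 0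
  | .fls => 0
  | .neg φ => φ.deg
  | .conj φ ψ => max φ.deg ψ.deg
  | .disj φ ψ => max φ.deg ψ.deg
  | .impl φ ψ => max φ.deg ψ.deg
  | .all _ φ => φ.deg + 1
  | .ex _ φ => φ.deg + 1

/-- Free variables. -/
def Fml.free : Fml → Finset ℕ
  | .atom _ args => Finset.univ.image args
  | .eq v w => {v, w}
  | .fls => ∅
  | .neg φ => φ.free
  | .conj φ ψ => φ.free ∪ ψ.free
  | .disj φ ψ => φ.free ∪ ψ.free
  | .impl φ ψ => φ.free ∪ ψ.free
  | .all v φ => φ.free.erase v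
  | .ex v φ => φ.free.erase v

/-- All variables occurring (free or bound). -/
def Fml.vars : Fml → Finset ℕ
  | .atom _ args => Finset.univ.image args
  | .eq v w => {v, w}
  | .fls => ∅
  | .neg φ => φ.vars
  | .conj φ ψ => φ.vars ∪ ψ.vars
  | .disj φ ψ => φ.vars ∪ ψ.vars
  | .impl φ ψ => φ.vars ∪ ψ.vars
  | .all v φ => insert v φ.vars
  | .ex v φ => insert v φ.vars

/-- Predicate symbols occurring in a formula. -/
def Fml.syms : Fml → Finset Sym
  | .atom s _ => {s}
  | .eq _ _ => ∅
  | .fls => ∅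
  | .neg φ => φ.syms
  | .conj φ ψ => φ.syms ∪ ψ.syms
  | .disj φ ψ => φ.syms ∪ ψ.syms
  | .impl φ ψ => φ.syms ∪ ψ.syms
  | .all _ φ => φ.syms
  | .ex _ φ => φ.syms

/-- Σ_φ : the symbols of φ together with R and E. -/
def sigOf (φ : Fml) : Finset Sym := φ.syms ∪ {Sym.R, Sym.E}

/-- Logical equivalence. -/
def FmlEquiv (φ ψ : Fml) : Prop :=
  ∀ (M : Model) (f : ℕ → M.D), φ.eval M f ↔ ψ.eval M f

/-- Logical consequence between single formulas. -/
def EntailsF (φ ψ : Fml) : Prop :=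
  ∀ (M : Model) (f : ℕ → M.D), φ.eval M f → ψ.eval M f

/-- Logical consequence from a set of formulas. -/
def EntailsSet (Γ : Set Fml) (φ : Fml) : Prop :=
  ∀ (M : Model) (f : ℕ → M.D), (∀ ψ ∈ Γ, ψ.eval M f) → φ.eval M f

def Satisfiable (φ : Fml) : Prop := ∃ (M : Model) (f : ℕ → M.D), φ.eval M f

/-- Intuitionistic predicate formulas (without identity); an `n`-ary letter
indexed by `m` takes `n` object variables. -/
inductive IFml : Type
  | atom (n m : ℕ) (args : Fin n → ℕ)
  | fls
  | conj (i j : IFml)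
  | disj (i j : IFml)
  | impl (i j : IFml)
  | all (v : ℕ) (i : IFml)
  | ex (v : ℕ) (i : IFml)

/-- Standard x-translation.  Object variables `v` of intuitionistic formulas are
represented as the even classical variables `2*v`; world variables are odd, and
a fresh world variable for a binder under world variable `x` is `x+2`. -/
def ST : IFml → ℕ → Fml
  | .atom n m args, x => .atom (.P n m) (Fin.cons x (fun i => 2 * args i))
  | .fls, x => .neg (.eq x x)
  | .conj i j, x => .conj (ST i x) (ST j x)
  | .disj i j, x => .disj (ST i x) (ST j x)
  | .impl i j, x =>
      .all (x + 2) (.impl (.atom .R ![x, x + 2]) (.impl (ST i (x + 2)) (ST j (x + 2))))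
  | .ex w i, x => .ex (2 * w) (.conj (.atom .E ![x, 2 * w]) (ST i x))
  | .all w i, x =>
      .all (x + 2) (.all (2 * w)
        (.impl (.conj (.atom .R ![x, x + 2]) (.atom .E ![x + 2, 2 * w])) (ST i (x + 2))))

/-- `ψ` is a standard x-translation (with x the fixed variable 1). -/
def IsSTF (ψ : Fml) : Prop := ∃ i : IFml, ψ = ST i 1

/-- Truth of `φ(x, w̄ₙ)` at the n-ary evaluation point `(M, a, b̄ₙ)`:
true under every assignment sending `x` (variable 1) to `a` and `wᵢ`
(variable `2*i`) to `bᵢ`. -/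
def Sat (M : Model) (a : M.D) (bs : List M.D) (φ : Fml) : Prop :=
  ∀ f : ℕ → M.D, f 1 = a → (∀ i : Fin bs.length, f (2 * i.val) = bs.get i) → φ.eval M f

/-- Free variables of φ are among x, w₁, …, wₙ. -/
def FreeOK (n : ℕ) (φ : Fml) : Prop :=
  ∀ v ∈ φ.free, v = 1 ∨ ∃ i < n, v = 2 * i

def relR (α : Model) (a b : α.D) : Prop := α.rel .R ![a, b]
def relE (α : Model) (a b : α.D) : Prop := α.rel .E ![a, b]

/-- Truth of the atom `P(x, w̄_l)` at `(α, a, ō_l)`. -/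
def atomSat (α : Model) (P : Sym) (a : α.D) (os : List α.D) : Prop :=
  ∃ h : P.arity = os.length + 1, α.rel P (fun i => (a :: os).get (Fin.cast h i))

/-- The model named by a side: `true ↦ M`, `false ↦ N`. -/
def side (M N : Model) : Bool → Model
  | true => M
  | false => N

/-- `⟨(M,a,b̄ₙ),(N,c,d̄ₙ)⟩_k`-asimulation conditions (without the condition on the
distinguished points).  The relation `A` relates tuples `(w̄_m, a'; ō_l)` over one
of the two models to similar tuples over one of the two models. -/
structure IsKAsim (Θ : Set Sym) (M N : Model) (n k : ℕ)
    (A : ∀ s t : Bool, List (side M N s).D → (side M N s).D → List (side M N s).D →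
          List (side M N t).D → (side M N t).D → List (side M N t).D → Prop) : Prop where
  lengths : ∀ s t ws a' os ws' c' os', A s t ws a' os ws' c' os' →
      ws.length = ws'.length ∧ os.length = os'.length
  atoms : ∀ s t ws a' os ws' c' os', A s t ws a' os ws' c' os' →
      ∀ P ∈ Θ, P ≠ Sym.R → P ≠ Sym.E →
        atomSat (side M N s) P a' os → atomSat (side M N t) P c' os'
  back : ∀ s t ws a' os ws' c' os', A s t ws a' os ws' c' os' →
      ws.length + os.length < n + k →
      ∀ c'', relR (side M N t) c' c'' →
        ∃ a'', relR (side M N s) a' a'' ∧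
          A t s (ws' ++ [c']) c'' os' (ws ++ [a']) a'' os ∧
          A s t (ws ++ [a']) a'' os (ws' ++ [c']) c'' os'
  exi : ∀ s t ws a' os ws' c' os', A s t ws a' os ws' c' os' →
      ws.length + os.length < n + k →
      ∀ b'', relE (side M N s) a' b'' →
        ∃ d'', relE (side M N t) c' d'' ∧
          A s t ws a' (os ++ [b'']) ws' c' (os' ++ [d''])
  uni : ∀ s t ws a' os ws' c' os', A s t ws a' os ws' c' os' →
      ws.length + os.length + 1 < n + k →
      ∀ c'' d'', relR (side M N t) c' c'' → relE (side M N t) c'' d'' →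
        ∃ a'' b'', relR (side M N s) a' a'' ∧ relE (side M N s) a'' b'' ∧
          A s t (ws ++ [a']) a'' (os ++ [b'']) (ws' ++ [c']) c'' (os' ++ [d''])

/-- (Unparametrized) asimulation conditions. -/
structure IsAsim (Θ : Set Sym) (M N : Model)
    (A : ∀ s t : Bool, (side M N s).D → List (side M N s).D →
          (side M N t).D → List (side M N t).D → Prop) : Prop where
  lengths : ∀ s t a' os c' os', A s t a' os c' os' → os.length = os'.length
  atoms : ∀ s t a' os c' os', A s t a' os c' os' →
      ∀ P ∈ Θ, P ≠ Sym.R → P ≠ Sym.E →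
        atomSat (side M N s) P a' os → atomSat (side M N t) P c' os'
  back : ∀ s t a' os c' os', A s t a' os c' os' →
      ∀ c'', relR (side M N t) c' c'' →
        ∃ a'', relR (side M N s) a' a'' ∧ A t s c'' os' a'' os ∧ A s t a'' os c'' os'
  exi : ∀ s t a' os c' os', A s t a' os c' os' →
      ∀ b'', relE (side M N s) a' b'' →
        ∃ d'', relE (side M N t) c' d'' ∧ A s t a' (os ++ [b'']) c' (os' ++ [d''])
  uni : ∀ s t a' os c' os', A s t a' os c' os' →
      ∀ c'' d'', relR (side M N t) c' c'' → relE (side M N t) c'' d'' →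
        ∃ a'' b'', relR (side M N s) a' a'' ∧ relE (side M N s) a'' b'' ∧
          A s t a'' (os ++ [b'']) c'' (os' ++ [d''])

/-- Invariance with respect to k-asimulations (for formulas `φ(x, w̄ₙ)`). -/
def KInvariant (φ : Fml) (n k : ℕ) : Prop :=
  ∀ (Θ : Set Sym), ↑(sigOf φ) ⊆ Θ →
    ∀ (M N : Model) (a : M.D) (bs : List M.D) (c : N.D) (ds : List N.D),
      bs.length = n → ds.length = n →
      (∃ A, IsKAsim Θ M N n k A ∧ A true false [] a bs [] c ds) →
      Sat M a bs φ → Sat N c ds φ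

/-- Invariance with respect to asimulations. -/
def AsimInvariant (φ : Fml) (n : ℕ) : Prop :=
  ∀ (Θ : Set Sym), ↑(sigOf φ) ⊆ Θ →
    ∀ (M N : Model) (a : M.D) (bs : List M.D) (c : N.D) (ds : List N.D),
      bs.length = n → ds.length = n →
      (∃ A, IsAsim Θ M N A ∧ A true false a bs c ds) →
      Sat M a bs φ → Sat N c ds φ

def conjList : List Fml → Fml
  | [] => .neg .fls
  | φ :: l => .conj φ (conjList l)

def disjList : List Fml → Fml
  | [] => .fls
  | φ :: l => .disj φ (disjList l)

/-- A `(Σ_φ, (x, w̄ₙ), k)`-formula that is a standard x-translation. -/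
def GoodFml (φ : Fml) (n k : ℕ) (ψ : Fml) : Prop :=
  ψ.syms ⊆ sigOf φ ∧ FreeOK n ψ ∧ ψ.deg ≤ k ∧ IsSTF ψ

/-- A complete `(φ, (x, w̄ₙ), k)`-conjunction, given by its list of conjuncts. -/
def CompleteConj (φ : Fml) (n k : ℕ) (L : List Fml) : Prop :=
  (∀ ψ ∈ L, GoodFml φ n k ψ) ∧
  ∃ (M : Model) (a : M.D) (bs : List M.D), bs.length = n ∧
    Sat M a bs (conjList L) ∧ Sat M a bs φ ∧
    ∀ ψ : Fml, GoodFml φ n k ψ → Sat M a bs ψ → EntailsF (conjList L) ψ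

/-- All Θ-formulas that are standard x-translations of intuitionistic formulas
true at `(α, a, ōₗ)` are true at `(β, c, d̄ₗ)`. -/
def ITLe (Θ : Set Sym) (α : Model) (a : α.D) (os : List α.D)
    (β : Model) (c : β.D) (ds : List β.D) : Prop :=
  ∀ i : IFml, ↑(ST i 1).syms ⊆ Θ → FreeOK os.length (ST i 1) →
    Sat α a os (ST i 1) → Sat β c ds (ST i 1)

/-- ω-saturation: every type over finitely many parameters (the values of the
assignment `f` on the finite set `W`) in finitely many variables (`V`) that is
finitely satisfiable in `M` is realized in `M`. -/
def OmegaSaturated (M : Model) : Prop :=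
  ∀ (f : ℕ → M.D) (V W : Finset ℕ) (Γ : Set Fml),
    (∀ ψ ∈ Γ, ↑ψ.free ⊆ (↑(V ∪ W) : Set ℕ)) →
    (∀ Γ' : Finset Fml, ↑Γ' ⊆ Γ →
      ∃ g : ℕ → M.D, (∀ v ∉ V, g v = f v) ∧ ∀ ψ ∈ Γ', ψ.eval M g) →
    ∃ g : ℕ → M.D, (∀ v ∉ V, g v = f v) ∧ ∀ ψ ∈ Γ, ψ.eval M g

/-- The intuitionistic consequences of φ: Σ_φ-formulas in the variables
x, w̄ₙ that are standard x-translations and follow from φ. -/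
def IC (φ : Fml) (n : ℕ) : Set Fml :=
  {ψ | ψ.syms ⊆ sigOf φ ∧ FreeOK n ψ ∧ IsSTF ψ ∧ EntailsF φ ψ}

/-! K-relative notions. -/

def KSatisfiable (K : Set Model) (Γ : Set Fml) : Prop :=
  ∃ M ∈ K, ∃ f : ℕ → M.D, ∀ ψ ∈ Γ, ψ.eval M f

def KEntails (K : Set Model) (φ ψ : Fml) : Prop := ¬ KSatisfiable K {φ, ψ.neg}

def KEquiv (K : Set Model) (φ ψ : Fml) : Prop := KEntails K φ ψ ∧ KEntails K ψ φ

def KAsimInvariant (K : Set Model) (φ : Fml) (n : ℕ) : Prop :=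
  ∀ (Θ : Set Sym), ↑(sigOf φ) ⊆ Θ →
    ∀ (M N : Model), M ∈ K → N ∈ K →
      ∀ (a : M.D) (bs : List M.D) (c : N.D) (ds : List N.D),
        bs.length = n → ds.length = n →
        (∃ A, IsAsim Θ M N A ∧ A true false a bs c ds) →
        Sat M a bs φ → Sat N c ds φ

end IPC

/-!
By compactness it suffices to show that `φ` follows from its intuitionistic consequences
`IC φ n`. Let `(M, f)` satisfy `IC φ n`. Compactness again gives a model `(M₀, f₀)` of `φ` in
which every relevant standard translation false at `(M, f)` is false. Pass to the ultrapowers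
of `M₀` and `M` over a nonprincipal ultrafilter on `ℕ`; they realize countable types. Between
such models, "every standard translation true on the left is true on the right" is an
asimulation: each back-and-forth requirement is a countable type, and a finite part of it is
realized because a single intuitionistic implication, existential or universal statement
transfers from left to right. Invariance carries `φ` from the ultrapower of `M₀` to that of
`M`, and Łoś's theorem brings it down to `(M, f)`.
-/

namespace IPC

open Function

section Eval
variable {α : Model} {f : ℕ → α.D}

@[simp] theorem Fml.eval_eq {v w : ℕ} : (Fml.eq v w).eval α f ↔ f v = f w := Iff.rfl
@[simp] theorem Fml.eval_fls : Fml.fls.eval α f ↔ False := Iff.rfl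
@[simp] theorem Fml.eval_neg {φ : Fml} : φ.neg.eval α f ↔ ¬ φ.eval α f := Iff.rfl
@[simp] theorem Fml.eval_conj {φ ψ : Fml} :
    (φ.conj ψ).eval α f ↔ φ.eval α f ∧ ψ.eval α f := Iff.rfl
@[simp] theorem Fml.eval_disj {φ ψ : Fml} :
    (φ.disj ψ).eval α f ↔ φ.eval α f ∨ ψ.eval α f := Iff.rfl
@[simp] theorem Fml.eval_impl {φ ψ : Fml} :
    (φ.impl ψ).eval α f ↔ (φ.eval α f → ψ.eval α f) := Iff.rfl
@[simp] theorem Fml.eval_all {v : ℕ} {φ : Fml} :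
    (Fml.all v φ).eval α f ↔ ∀ d, φ.eval α (update f v d) := Iff.rfl
@[simp] theorem Fml.eval_ex {v : ℕ} {φ : Fml} :
    (Fml.ex v φ).eval α f ↔ ∃ d, φ.eval α (update f v d) := Iff.rfl

@[simp] theorem Fml.eval_R {p q : ℕ} : (Fml.atom .R ![p, q]).eval α f ↔ relR α (f p) (f q) :=
  iff_of_eq (congrArg (α.rel .R) (funext fun i => by fin_cases i <;> rfl))

@[simp] theorem Fml.eval_E {p q : ℕ} : (Fml.atom .E ![p, q]).eval α f ↔ relE α (f p) (f q) :=
  iff_of_eq (congrArg (α.rel .E) (funext fun i => by fin_cases i <;> rfl))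

end Eval

theorem Fml.eval_congr {α : Model} : ∀ (φ : Fml) {f g : ℕ → α.D},
    (∀ v ∈ φ.free, f v = g v) → (φ.eval α f ↔ φ.eval α g)
  | .atom s args, f, g, h => by
    have : (fun i => f (args i)) = fun i => g (args i) :=
      funext fun i => h _ (by simp [Fml.free])
    simp only [Fml.eval, this]
  | .eq v w, f, g, h => by
    simp only [Fml.eval, h v (by simp [Fml.free]), h w (by simp [Fml.free])]
  | .fls, _, _, _ => Iff.rfl
  | .neg φ, _, _, h => not_congr (φ.eval_congr h)
  | .conj φ ψ, _, _, h =>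
    and_congr (φ.eval_congr fun v hv => h v (by simp [Fml.free, hv]))
      (ψ.eval_congr fun v hv => h v (by simp [Fml.free, hv]))
  | .disj φ ψ, _, _, h =>
    or_congr (φ.eval_congr fun v hv => h v (by simp [Fml.free, hv]))
      (ψ.eval_congr fun v hv => h v (by simp [Fml.free, hv]))
  | .impl φ ψ, _, _, h =>
    imp_congr (φ.eval_congr fun v hv => h v (by simp [Fml.free, hv]))
      (ψ.eval_congr fun v hv => h v (by simp [Fml.free, hv]))
  | .all v φ, _, _, h => forall_congr' fun _ => φ.eval_congr fun w hw => by
    rcases eq_or_ne w v with rfl | hne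
    · simp
    · simp [Function.update_of_ne hne, h w (by simp [Fml.free, hne, hw])]
  | .ex v φ, _, _, h => exists_congr fun _ => φ.eval_congr fun w hw => by
    rcases eq_or_ne w v with rfl | hne
    · simp
    · simp [Function.update_of_ne hne, h w (by simp [Fml.free, hne, hw])]

theorem eval_ST_congr {α : Model} :
    ∀ (i : IFml) {x y : ℕ} {f g : ℕ → α.D}, x % 2 = 1 → y % 2 = 1 → f x = g y →
      (∀ v, v % 2 = 0 → f v = g v) → ((ST i x).eval α f ↔ (ST i y).eval α g)
  | .atom n m args, x, y, f, g, _, _, hxy, hev => by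
    have : (fun k => f ((Fin.cons x fun k => 2 * args k : Fin (n + 1) → ℕ) k)) =
        fun k => g ((Fin.cons y fun k => 2 * args k : Fin (n + 1) → ℕ) k) :=
      funext fun k => Fin.cases (by simpa using hxy) (fun k => by simpa using hev _ (by omega)) k
    exact iff_of_eq (congrArg (α.rel _) this)
  | .fls, _, _, _, _, _, _, _, _ => by simp [ST]
  | .conj i j, _, _, _, _, hx, hy, hxy, hev => by
    simp only [ST, Fml.eval_conj, eval_ST_congr i hx hy hxy hev, eval_ST_congr j hx hy hxy hev]
  | .disj i j, _, _, _, _, hx, hy, hxy, hev => by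
    simp only [ST, Fml.eval_disj, eval_ST_congr i hx hy hxy hev, eval_ST_congr j hx hy hxy hev]
  | .impl i j, x, y, f, g, hx, hy, hxy, hev => by
    simp only [ST, Fml.eval_all, Fml.eval_impl, Fml.eval_R]
    refine forall_congr' fun d => ?_
    have he : ∀ v, v % 2 = 0 → update f (x + 2) d v = update g (y + 2) d v := fun v hv => by
      simp [update_of_ne (show v ≠ x + 2 by omega), update_of_ne (show v ≠ y + 2 by omega),
        hev v hv]
    have hxy' : update f (x + 2) d (x + 2) = update g (y + 2) d (y + 2) := by simp
    rw [eval_ST_congr i (by omega) (by omega) hxy' he,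
      eval_ST_congr j (by omega) (by omega) hxy' he, update_self, update_self,
      update_of_ne (show x ≠ x + 2 by omega), update_of_ne (show y ≠ y + 2 by omega), hxy]
  | .all w i, x, y, f, g, hx, hy, hxy, hev => by
    simp only [ST, Fml.eval_all, Fml.eval_impl, Fml.eval_conj, Fml.eval_R, Fml.eval_E]
    refine forall_congr' fun d => forall_congr' fun e => ?_
    have he : ∀ v, v % 2 = 0 → update (update f (x + 2) d) (2 * w) e v =
        update (update g (y + 2) d) (2 * w) e v := fun v hv => by
      by_cases hw : v = 2 * w
      · simp [hw]
      · simp [hw, update_of_ne (show v ≠ x + 2 by omega),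
          update_of_ne (show v ≠ y + 2 by omega), hev v hv]
    have hxy' : update (update f (x + 2) d) (2 * w) e (x + 2) =
        update (update g (y + 2) d) (2 * w) e (y + 2) := by
      simp [update_of_ne (show x + 2 ≠ 2 * w by omega),
        update_of_ne (show y + 2 ≠ 2 * w by omega)]
    rw [eval_ST_congr i (by omega) (by omega) hxy' he, hxy', he (2 * w) (by omega)]
    simp [update_of_ne (show x ≠ 2 * w by omega), update_of_ne (show y ≠ 2 * w by omega), hxy]
  | .ex w i, x, y, f, g, hx, hy, hxy, hev => by
    simp only [ST, Fml.eval_ex, Fml.eval_conj, Fml.eval_E]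
    refine exists_congr fun d => ?_
    have he : ∀ v, v % 2 = 0 → update f (2 * w) d v = update g (2 * w) d v := fun v hv => by
      by_cases hw : v = 2 * w
      · simp [hw]
      · simp [hw, hev v hv]
    have hxy' : update f (2 * w) d x = update g (2 * w) d y := by
      simp [update_of_ne (show x ≠ 2 * w by omega), update_of_ne (show y ≠ 2 * w by omega), hxy]
    rw [eval_ST_congr i hx hy hxy' he, hxy', he (2 * w) (by omega)]

def Assigns {α : Model} (g : ℕ → α.D) (x : ℕ) (a : α.D) (os : List α.D) : Prop :=
  g x = a ∧ ∀ k : Fin os.length, g (2 * k) = os.get k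

noncomputable def canon (α : Model) (a : α.D) (os : List α.D) : ℕ → α.D :=
  fun v => if v = 1 then a else os.getD (v / 2) a

section Assigns
variable {α : Model} {g : ℕ → α.D} {x : ℕ} {a : α.D} {os : List α.D}

theorem assigns_canon (α : Model) (a : α.D) (os : List α.D) : Assigns (canon α a os) 1 a os :=
  ⟨by simp [canon], fun k => by simp [canon, show 2 * (k : ℕ) ≠ 1 by omega]⟩

theorem Assigns.update_world (h : Assigns g x a os) {y : ℕ} (hy : y % 2 = 1) (b : α.D) :
    Assigns (update g y b) y b os :=
  ⟨update_self .., fun k => by rw [update_of_ne (by omega), h.2 k]⟩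

theorem Assigns.update_append (h : Assigns g x a os) (hx : x % 2 = 1) (b : α.D) :
    Assigns (update g (2 * os.length) b) x a (os ++ [b]) := by
  refine ⟨by rw [update_of_ne (by omega), h.1], fun k => ?_⟩
  rcases (Nat.lt_succ_iff.1 (by simpa using k.2) : (k : ℕ) ≤ os.length).eq_or_lt with hk | hk
  · simp [hk]
  · rw [update_of_ne (by omega), h.2 ⟨k, hk⟩]
    simp [List.getElem_append_left hk]

theorem sat_iff_eval {ψ : Fml} (h : Assigns g 1 a os) (hψ : FreeOK os.length ψ) :
    Sat α a os ψ ↔ ψ.eval α g := by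
  refine ⟨fun hs => hs g h.1 h.2, fun he f f1 f2 => (ψ.eval_congr fun v hv => ?_).1 he⟩
  rcases hψ v hv with rfl | ⟨k, hk, rfl⟩
  · rw [h.1, f1]
  · rw [h.2 ⟨k, hk⟩, f2 ⟨k, hk⟩]

theorem sat_ST_iff_eval {i : IFml} (h : Assigns g x a os) (hx : x % 2 = 1)
    (hi : FreeOK os.length (ST i 1)) : Sat α a os (ST i 1) ↔ (ST i x).eval α g := by
  rw [sat_iff_eval (h.update_world (y := 1) rfl a) hi]
  exact eval_ST_congr i rfl hx (by rw [update_self, h.1])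
    fun v hv => update_of_ne (by omega) ..

theorem Assigns.comp {β : Model} (h : Assigns g x a os) (e : α.D → β.D) :
    Assigns (e ∘ g) x (e a) (os.map e) :=
  ⟨congrArg e h.1, fun k => by simpa using congrArg e (h.2 ⟨k, by simpa using k.2⟩)⟩

end Assigns

def IFml.fv : IFml → Finset ℕ
  | .atom _ _ args => Finset.univ.image args
  | .fls => ∅
  | .conj i j => i.fv ∪ j.fv
  | .disj i j => i.fv ∪ j.fv
  | .impl i j => i.fv ∪ j.fv
  | .all w i => i.fv.erase w
  | .ex w i => i.fv.erase w

theorem mem_free_ST (i : IFml) {x v : ℕ} (hx : x % 2 = 1) :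
    v ∈ (ST i x).free ↔ v = x ∨ v % 2 = 0 ∧ v / 2 ∈ i.fv := by
  induction i generalizing x with
  | atom n m args =>
    dsimp only [ST, Fml.free, IFml.fv, Sym.arity]
    simp only [Finset.mem_image, Finset.mem_univ, true_and, Fin.exists_fin_succ, Fin.cons_zero,
      Fin.cons_succ]
    grind
  | _ =>
    dsimp only [ST, Fml.free, IFml.fv, Sym.arity]
    simp (disch := omega) only [Finset.mem_union, Finset.mem_erase, Finset.mem_insert,
      Finset.mem_singleton, Finset.notMem_empty, Finset.mem_image, Fin.exists_fin_two,
      Matrix.cons_val_zero, Matrix.cons_val_one, Matrix.cons_val_fin_one, *]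
    grind

theorem freeOK_ST_iff {l : ℕ} {i : IFml} : FreeOK l (ST i 1) ↔ ∀ w ∈ i.fv, w < l := by
  constructor
  · intro h w hw
    rcases h (2 * w) ((mem_free_ST i rfl).2 (Or.inr ⟨by omega, by simpa using hw⟩)) with
      h1 | ⟨k, hk, hwk⟩ <;> omega
  · intro h v hv
    rcases (mem_free_ST i rfl).1 hv with h1 | ⟨hv2, hvi⟩
    · exact Or.inl h1
    · exact Or.inr ⟨v / 2, h _ hvi, by omega⟩

theorem syms_ST (i : IFml) (x : ℕ) : (ST i x).syms = (ST i 1).syms := by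
  induction i generalizing x with
  | atom | fls => rfl
  | conj i j ihi ihj | disj i j ihi ihj =>
    simp only [ST, Fml.syms]; rw [ihi x, ihi 1, ihj x, ihj 1]
  | impl i j ihi ihj => simp only [ST, Fml.syms]; rw [ihi (x + 2), ihi 3, ihj (x + 2), ihj 3]
  | all w i ih => simp only [ST, Fml.syms]; rw [ih (x + 2), ih 3]
  | ex w i ih => simp only [ST, Fml.syms]; rw [ih x, ih 1]

def IFml.encode : IFml → ℕ
  | .atom n m args => Nat.pair 0 (Nat.pair n (Nat.pair m (Encodable.encode (List.ofFn args))))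
  | .fls => Nat.pair 1 0
  | .conj i j => Nat.pair 2 (Nat.pair i.encode j.encode)
  | .disj i j => Nat.pair 3 (Nat.pair i.encode j.encode)
  | .impl i j => Nat.pair 4 (Nat.pair i.encode j.encode)
  | .all v i => Nat.pair 5 (Nat.pair v i.encode)
  | .ex v i => Nat.pair 6 (Nat.pair v i.encode)

theorem IFml.encode_injective : Function.Injective IFml.encode := by
  intro i j h
  induction i generalizing j <;> cases j <;> simp [IFml.encode, Nat.pair_eq_pair] at h ⊢ <;>
    grind [Encodable.encode_inj, List.ofFn_inj']

instance : Countable IFml := IFml.encode_injective.countable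

def itrue : IFml := .impl .fls .fls
def iconjL : List IFml → IFml := List.foldr .conj itrue
def idisjL : List IFml → IFml := List.foldr .disj .fls

def Admissible (Θ : Set Sym) (l : ℕ) (i : IFml) : Prop :=
  ↑(ST i 1).syms ⊆ Θ ∧ FreeOK l (ST i 1)

section Admissible
variable {Θ : Set Sym} {l : ℕ}

theorem Admissible.impl (hR : Sym.R ∈ Θ) {i j : IFml} (hi : Admissible Θ l i)
    (hj : Admissible Θ l j) : Admissible Θ l (.impl i j) := by
  refine ⟨?_, freeOK_ST_iff.2 ?_⟩
  · simp only [ST, Fml.syms, syms_ST i 3, syms_ST j 3, Finset.coe_union, Finset.coe_singleton,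
      Set.union_subset_iff, Set.singleton_subset_iff]
    exact ⟨hR, hi.1, hj.1⟩
  · simp only [IFml.fv, Finset.mem_union]
    rintro w (hw | hw)
    exacts [freeOK_ST_iff.1 hi.2 w hw, freeOK_ST_iff.1 hj.2 w hw]

theorem Admissible.ex (hE : Sym.E ∈ Θ) {i : IFml} (hi : Admissible Θ (l + 1) i) :
    Admissible Θ l (.ex l i) := by
  refine ⟨?_, freeOK_ST_iff.2 ?_⟩
  · simp only [ST, Fml.syms, Finset.coe_union, Finset.coe_singleton,
      Set.union_subset_iff, Set.singleton_subset_iff]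
    exact ⟨hE, hi.1⟩
  · simp only [IFml.fv, Finset.mem_erase]
    rintro w ⟨hwl, hw⟩
    have := freeOK_ST_iff.1 hi.2 w hw
    omega

theorem Admissible.all (hR : Sym.R ∈ Θ) (hE : Sym.E ∈ Θ) {i : IFml}
    (hi : Admissible Θ (l + 1) i) : Admissible Θ l (.all l i) := by
  refine ⟨?_, freeOK_ST_iff.2 ?_⟩
  · simp only [ST, Fml.syms, syms_ST i 3, Finset.coe_union, Finset.coe_singleton,
      Set.union_subset_iff, Set.singleton_subset_iff]
    exact ⟨⟨hR, hE⟩, hi.1⟩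
  · simp only [IFml.fv, Finset.mem_erase]
    rintro w ⟨hwl, hw⟩
    have := freeOK_ST_iff.1 hi.2 w hw
    omega

theorem admissible_fls : Admissible Θ l .fls :=
  ⟨by simp [ST, Fml.syms], by simp [freeOK_ST_iff, IFml.fv]⟩

theorem Admissible.conj {i j : IFml} (hi : Admissible Θ l i) (hj : Admissible Θ l j) :
    Admissible Θ l (.conj i j) := by
  refine ⟨?_, freeOK_ST_iff.2 ?_⟩
  · simp only [ST, Fml.syms, Finset.coe_union, Set.union_subset_iff]
    exact ⟨hi.1, hj.1⟩
  · simp only [IFml.fv, Finset.mem_union]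
    rintro w (hw | hw)
    exacts [freeOK_ST_iff.1 hi.2 w hw, freeOK_ST_iff.1 hj.2 w hw]

theorem Admissible.disj {i j : IFml} (hi : Admissible Θ l i) (hj : Admissible Θ l j) :
    Admissible Θ l (.disj i j) := by
  refine ⟨?_, freeOK_ST_iff.2 ?_⟩
  · simp only [ST, Fml.syms, Finset.coe_union, Set.union_subset_iff]
    exact ⟨hi.1, hj.1⟩
  · simp only [IFml.fv, Finset.mem_union]
    rintro w (hw | hw)
    exacts [freeOK_ST_iff.1 hi.2 w hw, freeOK_ST_iff.1 hj.2 w hw]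

theorem Admissible.iconjL (hR : Sym.R ∈ Θ) {L : List IFml}
    (hL : ∀ j ∈ L, Admissible Θ l j) : Admissible Θ l (iconjL L) := by
  induction L with
  | nil => exact admissible_fls.impl hR admissible_fls
  | cons j L ih => exact (hL j (by simp)).conj (ih fun j' hj' => hL j' (by simp [hj']))

theorem Admissible.idisjL {L : List IFml} (hL : ∀ j ∈ L, Admissible Θ l j) :
    Admissible Θ l (idisjL L) := by
  induction L with
  | nil => exact admissible_fls
  | cons j L ih => exact (hL j (by simp)).disj (ih fun j' hj' => hL j' (by simp [hj']))

theorem admissible_atom {m : ℕ} (hP : Sym.P l m ∈ Θ) :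
    Admissible Θ l (.atom l m fun k => k) :=
  ⟨by simpa [ST, Fml.syms] using hP, freeOK_ST_iff.2 fun w hw => by
    obtain ⟨k, -, rfl⟩ := Finset.mem_image.1 hw
    exact k.2⟩

end Admissible

theorem eval_ST_iconjL {α : Model} (L : List IFml) (x : ℕ) (g : ℕ → α.D) :
    (ST (iconjL L) x).eval α g ↔ ∀ j ∈ L, (ST j x).eval α g := by
  induction L with
  | nil => simp [iconjL, itrue, ST]
  | cons j L ih => simp [iconjL, ST, ← ih]

theorem eval_ST_idisjL {α : Model} (L : List IFml) (x : ℕ) (g : ℕ → α.D) :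
    (ST (idisjL L) x).eval α g ↔ ∃ j ∈ L, (ST j x).eval α g := by
  induction L with
  | nil => simp [idisjL, ST]
  | cons j L ih => simp [idisjL, ST, ← ih]

section Forcing
variable {α : Model} {a : α.D} {os : List α.D}

theorem sat_iff_of_assigns {ψ : Fml} {P : Prop}
    (h : ∀ g, Assigns g 1 a os → (ψ.eval α g ↔ P)) : Sat α a os ψ ↔ P :=
  ⟨fun hs => (h _ (assigns_canon α a os)).1 (hs _ (assigns_canon α a os).1
      (assigns_canon α a os).2), fun hP g h1 h2 => (h g ⟨h1, h2⟩).2 hP⟩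

theorem sat_ST_iconjL {L : List IFml} (hL : ∀ j ∈ L, FreeOK os.length (ST j 1)) :
    Sat α a os (ST (iconjL L) 1) ↔ ∀ j ∈ L, Sat α a os (ST j 1) :=
  sat_iff_of_assigns fun g hg => by
    rw [eval_ST_iconjL]
    exact forall₂_congr fun j hj => (sat_ST_iff_eval hg rfl (hL j hj)).symm

theorem sat_ST_idisjL {L : List IFml} (hL : ∀ j ∈ L, FreeOK os.length (ST j 1)) :
    Sat α a os (ST (idisjL L) 1) ↔ ∃ j ∈ L, Sat α a os (ST j 1) :=
  sat_iff_of_assigns fun g hg => by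
    rw [eval_ST_idisjL]
    exact exists_congr fun j => and_congr_right fun hj => (sat_ST_iff_eval hg rfl (hL j hj)).symm

theorem sat_ST_impl {i j : IFml} (hi : FreeOK os.length (ST i 1)) (hj : FreeOK os.length (ST j 1)) :
    Sat α a os (ST (.impl i j) 1) ↔
      ∀ b, relR α a b → Sat α b os (ST i 1) → Sat α b os (ST j 1) :=
  sat_iff_of_assigns fun g hg => by
    simp only [ST, Fml.eval_all, Fml.eval_impl, Fml.eval_R]
    refine forall_congr' fun b => ?_
    have hg' := hg.update_world (y := 3) rfl b
    rw [update_of_ne (by omega), update_self, hg.1, sat_ST_iff_eval hg' rfl hi,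
      sat_ST_iff_eval hg' rfl hj]

theorem sat_ST_ex {i : IFml} (hi : FreeOK (os.length + 1) (ST i 1)) :
    Sat α a os (ST (.ex os.length i) 1) ↔ ∃ b, relE α a b ∧ Sat α a (os ++ [b]) (ST i 1) :=
  sat_iff_of_assigns fun g hg => by
    simp only [ST, Fml.eval_ex, Fml.eval_conj, Fml.eval_E]
    refine exists_congr fun b => ?_
    rw [update_of_ne (by omega), update_self, hg.1,
      sat_ST_iff_eval (hg.update_append rfl b) rfl (by simpa using hi)]

theorem sat_ST_all {i : IFml} (hi : FreeOK (os.length + 1) (ST i 1)) :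
    Sat α a os (ST (.all os.length i) 1) ↔
      ∀ b c, relR α a b → relE α b c → Sat α b (os ++ [c]) (ST i 1) :=
  sat_iff_of_assigns fun g hg => by
    simp only [ST, Fml.eval_all, Fml.eval_impl, Fml.eval_conj, Fml.eval_R, Fml.eval_E]
    refine forall_congr' fun b => forall_congr' fun c => ?_
    have hg' := (hg.update_world (y := 3) rfl b).update_append rfl c
    rw [update_of_ne (by omega), update_of_ne (by omega), update_self, hg.1, hg'.1,
      sat_ST_iff_eval hg' rfl (by simpa using hi), and_imp]

theorem sat_ST_atom {l : ℕ} (hl : os.length = l) (m : ℕ) :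
    Sat α a os (ST (.atom l m fun k => k) 1) ↔ atomSat α (.P l m) a os := by
  subst hl
  refine sat_iff_of_assigns fun g hg => ?_
  have hargs : (fun k => g ((Fin.cons 1 fun k : Fin os.length => 2 * (k : ℕ) :
      Fin (os.length + 1) → ℕ) k)) = fun k => (a :: os).get k := by
    funext k
    refine Fin.cases ?_ (fun k => ?_) k
    · simpa using hg.1
    · simpa using hg.2 k
  exact (iff_of_eq (congrArg (α.rel _) hargs)).trans
    ⟨fun h => ⟨rfl, h⟩, fun ⟨_, h⟩ => h⟩

end Forcing

section Ultraproduct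
variable {ι : Type} (U : Ultrafilter ι) (M : ι → Model)

def UProd.setoid : Setoid (∀ i, (M i).D) where
  r x y := ∀ᶠ i in ↑U, x i = y i
  iseqv := ⟨fun _ => .of_forall fun _ => rfl, fun h => h.mono fun _ e => e.symm,
    fun h₁ h₂ => (h₁.and h₂).mono fun _ e => e.1.trans e.2⟩

noncomputable def UProd : Model where
  D := Quotient (UProd.setoid U M)
  ne := ⟨Quotient.mk _ fun i => Classical.choice (M i).ne⟩
  rel s v := ∀ᶠ i in ↑U, (M i).rel s fun k => (v k).out i

variable {M}

def UProd.mk (x : ∀ i, (M i).D) : (UProd U M).D := Quotient.mk _ x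

variable {U}

theorem UProd.out_mk (x : ∀ i, (M i).D) : ∀ᶠ i in ↑U, (UProd.mk U x).out i = x i :=
  Quotient.exact (Quotient.out_eq (Quotient.mk (UProd.setoid U M) x))

theorem UProd.exists_eventually_iff {P : ∀ i, (M i).D → Prop} :
    (∃ x : (UProd U M).D, ∀ᶠ i in ↑U, P i (x.out i)) ↔
      ∀ᶠ i in ↑U, ∃ d, P i d := by
  classical
  refine ⟨fun ⟨x, hx⟩ => hx.mono fun i hi => ⟨_, hi⟩, fun h => ?_⟩
  let g : ∀ i, (M i).D := fun i =>
    if hi : ∃ d, P i d then hi.choose else Classical.choice (M i).ne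
  refine ⟨UProd.mk U g, (h.and (UProd.out_mk g)).mono fun i ⟨hi, he⟩ => ?_⟩
  rw [he]
  simpa only [g, dif_pos hi] using hi.choose_spec

theorem UProd.out_update (f : ℕ → (UProd U M).D) (v : ℕ) (d : (UProd U M).D) (i : ι) :
    (fun w => (update f v d w).out i) = update (fun w => (f w).out i) v (d.out i) :=
  funext fun w => apply_update (fun _ q => q.out i) f v d w

theorem UProd.eval_iff : ∀ (φ : Fml) (f : ℕ → (UProd U M).D),
    φ.eval (UProd U M) f ↔ ∀ᶠ i in ↑U, φ.eval (M i) fun v => (f v).out i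
  | .atom _ _, _ => Iff.rfl
  | .eq _ _, _ => Quotient.out_equiv_out.symm
  | .fls, _ => ⟨False.elim, fun h => let ⟨_, hi⟩ := h.exists; hi⟩
  | .neg φ, f => by simp only [Fml.eval_neg, UProd.eval_iff φ f, Ultrafilter.eventually_not]
  | .conj φ ψ, f => by
    simp only [Fml.eval_conj, UProd.eval_iff φ f, UProd.eval_iff ψ f, Filter.eventually_and]
  | .disj φ ψ, f => by
    simp only [Fml.eval_disj, UProd.eval_iff φ f, UProd.eval_iff ψ f, Ultrafilter.eventually_or]
  | .impl φ ψ, f => by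
    simp only [Fml.eval_impl, UProd.eval_iff φ f, UProd.eval_iff ψ f, Ultrafilter.eventually_imp]
  | .ex v φ, f => by
    simp only [Fml.eval_ex, UProd.eval_iff φ, UProd.out_update]
    exact UProd.exists_eventually_iff
      (P := fun i e => φ.eval (M i) (update (fun w => (f w).out i) v e))
  | .all v φ, f => by
    simp only [Fml.eval_all, UProd.eval_iff φ, UProd.out_update]
    rw [← not_iff_not, not_forall]
    simp_rw [← Ultrafilter.eventually_not, not_forall]
    exact UProd.exists_eventually_iff
      (P := fun i e => ¬ φ.eval (M i) (update (fun w => (f w).out i) v e))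

theorem UProd.eval_mk_iff (φ : Fml) (g : ℕ → ∀ i, (M i).D) :
    φ.eval (UProd U M) (fun v => UProd.mk U (g v)) ↔
      ∀ᶠ i in ↑U, φ.eval (M i) fun v => g v i := by
  rw [UProd.eval_iff]
  have : ∀ᶠ i in ↑U, ∀ v ∈ φ.free, (UProd.mk U (g v)).out i = g v i :=
    (Filter.eventually_all_finset _).2 fun v _ => UProd.out_mk (g v)
  exact Filter.eventually_congr (this.mono fun i hi => φ.eval_congr hi)

end Ultraproduct

theorem compactness {ι : Type} (Γ : ι → Fml) (ψ : Fml)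
    (h : ∀ (M : Model) (f : ℕ → M.D), (∀ k, (Γ k).eval M f) → ψ.eval M f) :
    ∃ S : Finset ι,
      ∀ (M : Model) (f : ℕ → M.D), (∀ k ∈ S, (Γ k).eval M f) → ψ.eval M f := by
  by_contra! hS
  choose M f hM hψ using hS
  let U : Ultrafilter (Finset ι) := .of .atTop
  have hU : ∀ k, ∀ᶠ S in (U : Filter (Finset ι)), k ∈ S := fun k =>
    ((Filter.eventually_ge_atTop {k}).filter_mono (Ultrafilter.of_le _)).mono
      fun _ hS => Finset.singleton_subset_iff.1 hS
  have hval : ∀ φ : Fml, φ.eval (UProd U M) (fun v => UProd.mk U fun S => f S v) ↔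
      ∀ᶠ S in ↑U, φ.eval (M S) (f S) := fun φ => UProd.eval_mk_iff φ _
  exact (hval ψ).1 (h _ _ fun k => (hval _).2 ((hU k).mono fun S hk => hM S k hk)) |>.exists.elim
    fun S hS => hψ S hS

noncomputable def UPow (M : Model) (U : Ultrafilter ℕ) : Model := UProd U fun _ => M

noncomputable def diag (M : Model) (U : Ultrafilter ℕ) (a : M.D) : (UPow M U).D :=
  UProd.mk U fun _ => a

theorem eval_diag (M : Model) (U : Ultrafilter ℕ) (ψ : Fml) (f : ℕ → M.D) :
    ψ.eval (UPow M U) (diag M U ∘ f) ↔ ψ.eval M f :=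
  (UProd.eval_mk_iff ψ fun v _ => f v).trans Filter.eventually_const

theorem sat_diag (M : Model) (U : Ultrafilter ℕ) {a : M.D} {bs : List M.D} {ψ : Fml}
    (hψ : FreeOK bs.length ψ) :
    Sat (UPow M U) (diag M U a) (bs.map (diag M U)) ψ ↔ Sat M a bs ψ := by
  have hc := assigns_canon M a bs
  rw [sat_iff_eval hc hψ, sat_iff_eval (hc.comp (diag M U)) (by simpa using hψ), eval_diag]

theorem eval_conjList {α : Model} (L : List Fml) (g : ℕ → α.D) :
    (conjList L).eval α g ↔ ∀ ψ ∈ L, ψ.eval α g := by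
  induction L with
  | nil => simp [conjList]
  | cons ψ L ih => simp [conjList, ih]

theorem eval_foldr_ex {α : Model} (L : List ℕ) (ψ : Fml) (f : ℕ → α.D) :
    (L.foldr Fml.ex ψ).eval α f ↔ ∃ g, (∀ v ∉ L, g v = f v) ∧ ψ.eval α g := by
  induction L generalizing f with
  | nil =>
    exact ⟨fun h => ⟨f, fun _ _ => rfl, h⟩, fun ⟨g, hg, h⟩ => funext (hg · (by simp)) ▸ h⟩
  | cons w L ih =>
    simp only [List.foldr_cons, Fml.eval_ex, ih]
    constructor
    · rintro ⟨d, g, hg, h⟩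
      exact ⟨g, fun v hv => by simp_all [update_of_ne], h⟩
    · rintro ⟨g, hg, h⟩
      refine ⟨g w, g, fun v hv => ?_, h⟩
      rcases eq_or_ne v w with rfl | hvw
      · simp
      · simp [update_of_ne hvw, hg v (by simp [hv, hvw])]

/-- Countable types (with a distinguished member `χ`) in the variables `V` over the parameters
given by `f` are realized. -/
def CountablySaturated (N : Model) : Prop :=
  ∀ (ι : Type) [Countable ι] (f : ℕ → N.D) (V : Finset ℕ) (χ : Fml) (Γ : ι → Fml),
    (∀ S : Finset ι, ∃ g : ℕ → N.D,
      (∀ v ∉ V, g v = f v) ∧ χ.eval N g ∧ ∀ k ∈ S, (Γ k).eval N g) →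
    ∃ g : ℕ → N.D, (∀ v ∉ V, g v = f v) ∧ χ.eval N g ∧ ∀ k, (Γ k).eval N g

theorem upow_hyperfilter_realize (M : Model) (f : ℕ → (UPow M (Filter.hyperfilter ℕ)).D)
    (V : Finset ℕ) (e : ℕ → Fml)
    (h : ∀ n, ∃ g, (∀ v ∉ V, g v = f v) ∧
      ∀ k < n, (e k).eval (UPow M (Filter.hyperfilter ℕ)) g) :
    ∃ g, (∀ v ∉ V, g v = f v) ∧ ∀ k, (e k).eval (UPow M (Filter.hyperfilter ℕ)) g := by
  classical
  let U := Filter.hyperfilter ℕ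
  let χ : ℕ → Fml := fun n => V.toList.foldr .ex (conjList ((List.range n).map e))
  have hχ : ∀ {α : Model} (n : ℕ) (f : ℕ → α.D),
      (χ n).eval α f ↔ ∃ g, (∀ v ∉ V, g v = f v) ∧ ∀ k < n, (e k).eval α g := by
    intro α n f
    simp [χ, eval_foldr_ex, eval_conjList]
  -- Coordinate `i` realizes the first `N i ≤ i` formulas, with `N i` as large as possible;
  -- since `χ n` holds in almost all coordinates, `N i → ∞` along the ultrafilter.
  let fi : ℕ → ℕ → M.D := fun i v => (f v).out i
  let N : ℕ → ℕ := fun i => Nat.findGreatest (fun n => (χ n).eval M (fi i)) i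
  have hN : ∀ i, (χ (N i)).eval M (fi i) := fun i =>
    Nat.findGreatest_spec (P := fun n => (χ n).eval M (fi i)) (Nat.zero_le i)
      ((hχ 0 _).2 ⟨_, fun _ _ => rfl, by simp⟩)
  choose w hwV hwe using fun i => (hχ (N i) (fi i)).1 (hN i)
  refine ⟨fun v => if v ∈ V then UProd.mk U fun i => w i v else f v, fun v hv => if_neg hv,
    fun k => (UProd.eval_iff _ _).2 ?_⟩
  have hlarge : ∀ᶠ i in (U : Filter ℕ), k < N i := by
    have hcof : ∀ᶠ i in (U : Filter ℕ), k + 1 ≤ i :=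
      Filter.hyperfilter_le_cofinite (Nat.cofinite_eq_atTop ▸ Filter.eventually_ge_atTop (k + 1))
    filter_upwards [(UProd.eval_iff (χ (k + 1)) f).1 ((hχ _ f).2 (h (k + 1))), hcof] with i hi hki
    exact Nat.le_findGreatest hki hi
  have hagree : ∀ᶠ i in (U : Filter ℕ), ∀ v ∈ (e k).free,
      (if v ∈ V then UProd.mk U (fun i => w i v) else f v).out i = w i v := by
    refine (Filter.eventually_all_finset _).2 fun v _ => ?_
    by_cases hv : v ∈ V
    · simpa [hv] using UProd.out_mk (U := U) fun i => w i v
    · exact .of_forall fun i => by simp [hv, hwV i v hv, fi]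
  filter_upwards [hlarge, hagree] with i hi hag
  exact ((e k).eval_congr hag).2 (hwe i k hi)

theorem countablySaturated_upow (M : Model) :
    CountablySaturated (UPow M (Filter.hyperfilter ℕ)) := by
  intro ι _ f V χ Γ h
  rcases isEmpty_or_nonempty ι with hι | hι
  · obtain ⟨g, hgV, hχ, -⟩ := h ∅
    exact ⟨g, hgV, hχ, isEmptyElim⟩
  · classical
    obtain ⟨u, hu⟩ := exists_surjective_nat ι
    obtain ⟨g, hgV, hg⟩ := upow_hyperfilter_realize M f V (fun n => χ.conj (Γ (u n)))
      fun n => by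
        obtain ⟨g, hgV, hχ, hΓ⟩ := h ((Finset.range n).image u)
        exact ⟨g, hgV, fun k hk => ⟨hχ, hΓ _ (Finset.mem_image_of_mem _ (Finset.mem_range.2 hk))⟩⟩
    exact ⟨g, hgV, (hg 0).1, fun k => (hu k).elim fun n hn => hn ▸ (hg n).2⟩

theorem eq_update_of_agree {X : Type} {f g : ℕ → X} {v : ℕ}
    (h : ∀ w ∉ ({v} : Finset ℕ), g w = f w) : g = update f v (g v) :=
  eq_update_iff.2 ⟨rfl, fun w hw => h w (by simpa using hw)⟩

section Asimulation
variable {Θ : Set Sym} {α β : Model} {a : α.D} {os : List α.D} {c : β.D} {os' : List β.D}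

theorem ITLe.back_finite (hR : Sym.R ∈ Θ) (hlen : os.length = os'.length)
    (h : ITLe Θ α a os β c os') {c₁ : β.D} (hc : relR β c c₁) {P N : List IFml}
    (hP : ∀ j ∈ P, Admissible Θ os.length j ∧ Sat β c₁ os' (ST j 1))
    (hN : ∀ j ∈ N, Admissible Θ os.length j ∧ ¬ Sat β c₁ os' (ST j 1)) :
    ∃ b, relR α a b ∧ (∀ j ∈ P, Sat α b os (ST j 1)) ∧
      ∀ j ∈ N, ¬ Sat α b os (ST j 1) := by
  have hPa := Admissible.iconjL hR fun j hj => (hP j hj).1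
  have hNa := Admissible.idisjL fun j hj => (hN j hj).1
  have hPf := fun j hj => (hP j hj).1.2
  have hNf := fun j hj => (hN j hj).1.2
  by_contra! hno
  have hs : Sat α a os (ST (.impl (iconjL P) (idisjL N)) 1) := by
    rw [sat_ST_impl hPa.2 hNa.2]
    intro b hab hbP
    exact (sat_ST_idisjL hNf).2 (hno b hab ((sat_ST_iconjL hPf).1 hbP))
  have hadm := hPa.impl hR hNa
  have hc' := h _ hadm.1 hadm.2 hs
  rw [sat_ST_impl (hlen ▸ hPa.2) (hlen ▸ hNa.2)] at hc'
  obtain ⟨j, hj, hsat⟩ := (sat_ST_idisjL (hlen ▸ hNf)).1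
    (hc' c₁ hc ((sat_ST_iconjL (hlen ▸ hPf)).2 fun j hj => (hP j hj).2))
  exact (hN j hj).2 hsat

theorem ITLe.back (hR : Sym.R ∈ Θ) (hα : CountablySaturated α)
    (hlen : os.length = os'.length) (h : ITLe Θ α a os β c os') {c₁ : β.D} (hc : relR β c c₁) :
    ∃ a₁, relR α a a₁ ∧ ITLe Θ β c₁ os' α a₁ os ∧ ITLe Θ α a₁ os β c₁ os' := by
  classical
  let T : {i // Admissible Θ os.length i} → Prop := fun i => Sat β c₁ os' (ST i.1 1)
  -- the type of `a₁`: an `R`-successor of `a` with the same admissible theory as `c₁`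
  obtain ⟨g, hgV, hg1, hg⟩ := hα _ (canon α a os) {3} (.atom .R ![1, 3])
    (fun i => if T i then ST i.1 3 else (ST i.1 3).neg) fun S => by
      obtain ⟨b, hab, hbP, hbN⟩ := h.back_finite hR hlen hc
        (P := (S.filter T).toList.map Subtype.val)
        (N := (S.filter (¬ T ·)).toList.map Subtype.val)
        (by simpa [List.forall_mem_map] using fun _ hp _ hT => ⟨hp, hT⟩)
        (by simpa [List.forall_mem_map] using fun _ hp _ hT => ⟨hp, hT⟩)
      have hb := (assigns_canon α a os).update_world (y := 3) rfl b
      refine ⟨update (canon α a os) 3 b, fun v hv => update_of_ne (by simpa using hv) .., ?_,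
        fun k hk => ?_⟩
      · simpa [(assigns_canon α a os).1] using hab
      · have := sat_ST_iff_eval hb rfl k.2.2
        split_ifs with hT
        · exact this.1 (hbP k.1 (by simpa [List.mem_map] using ⟨hk, k.2, hT⟩))
        · exact fun he => hbN k.1 (by simpa [List.mem_map] using ⟨hk, k.2, hT⟩) (this.2 he)
  obtain ⟨a₁, rfl⟩ : ∃ a₁, g = update (canon α a os) 3 a₁ :=
    ⟨_, eq_update_of_agree hgV⟩
  have hg' := (assigns_canon α a os).update_world (y := 3) rfl a₁
  have key : ∀ i (hi : Admissible Θ os.length i),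
      Sat α a₁ os (ST i 1) ↔ Sat β c₁ os' (ST i 1) := by
    intro i hi
    have := hg ⟨i, hi⟩
    rw [sat_ST_iff_eval hg' rfl hi.2]
    split_ifs at this with hT
    · exact iff_of_true this hT
    · exact iff_of_false this hT
  refine ⟨a₁, ?_, fun i hs hf => (key i ⟨hs, hlen ▸ hf⟩).2,
    fun i hs hf => (key i ⟨hs, hf⟩).1⟩
  simpa [(assigns_canon α a os).1] using hg1

theorem ITLe.exi_finite (hR : Sym.R ∈ Θ) (hE : Sym.E ∈ Θ) (hlen : os.length = os'.length)
    (h : ITLe Θ α a os β c os') {b : α.D} (hb : relE α a b) {P : List IFml}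
    (hP : ∀ j ∈ P, Admissible Θ (os.length + 1) j ∧ Sat α a (os ++ [b]) (ST j 1)) :
    ∃ d, relE β c d ∧ ∀ j ∈ P, Sat β c (os' ++ [d]) (ST j 1) := by
  have hPa := Admissible.iconjL hR fun j hj => (hP j hj).1
  have hPf : ∀ j ∈ P, FreeOK (os.length + 1) (ST j 1) := fun j hj => (hP j hj).1.2
  have hadm := hPa.ex hE
  have hs : Sat α a os (ST (.ex os.length (iconjL P)) 1) :=
    (sat_ST_ex hPa.2).2 ⟨b, hb, (sat_ST_iconjL (by simpa using hPf)).2 fun j hj => (hP j hj).2⟩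
  have hc := h _ hadm.1 hadm.2 hs
  rw [hlen] at hc hPf
  obtain ⟨d, hcd, hd⟩ := (sat_ST_ex (hlen ▸ hPa.2)).1 hc
  exact ⟨d, hcd, (sat_ST_iconjL (by simpa using hPf)).1 hd⟩

theorem ITLe.exi (hR : Sym.R ∈ Θ) (hE : Sym.E ∈ Θ) (hβ : CountablySaturated β)
    (hlen : os.length = os'.length) (h : ITLe Θ α a os β c os') {b : α.D} (hb : relE α a b) :
    ∃ d, relE β c d ∧ ITLe Θ α a (os ++ [b]) β c (os' ++ [d]) := by
  obtain ⟨g, hgV, hg1, hg⟩ := hβ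
    {i // Admissible Θ (os.length + 1) i ∧ Sat α a (os ++ [b]) (ST i 1)}
    (canon β c os') {2 * os'.length} (.atom .E ![1, 2 * os'.length]) (fun i => ST i.1 1)
    fun S => by
      obtain ⟨d, hcd, hdP⟩ := h.exi_finite hR hE hlen hb (P := S.toList.map Subtype.val)
        (by simpa [List.forall_mem_map] using fun _ hp hq _ => ⟨hp, hq⟩)
      have hd := (assigns_canon β c os').update_append rfl d
      refine ⟨update (canon β c os') (2 * os'.length) d,
        fun v hv => update_of_ne (by simpa using hv) .., ?_, fun k hk => ?_⟩
      · simpa [update_of_ne (show 1 ≠ 2 * os'.length by omega), (assigns_canon β c os').1]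
          using hcd
      · exact (sat_ST_iff_eval hd rfl (by simpa [← hlen] using k.2.1.2)).1
          (hdP k.1 (by simpa [List.mem_map] using ⟨k.2, hk⟩))
  obtain ⟨d, rfl⟩ : ∃ d, g = update (canon β c os') (2 * os'.length) d :=
    ⟨_, eq_update_of_agree hgV⟩
  have hg' := (assigns_canon β c os').update_append rfl d
  refine ⟨d, by simpa [hg'.1] using hg1, fun i hs hf hsat => ?_⟩
  have hf' : FreeOK (os.length + 1) (ST i 1) := by simpa using hf
  exact (sat_ST_iff_eval hg' rfl (by simpa [← hlen] using hf')).2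
    (hg ⟨i, ⟨hs, hf'⟩, hsat⟩)

theorem ITLe.uni_finite (hR : Sym.R ∈ Θ) (hE : Sym.E ∈ Θ) (hlen : os.length = os'.length)
    (h : ITLe Θ α a os β c os') {c₁ d₁ : β.D} (hc : relR β c c₁) (hd : relE β c₁ d₁)
    {N : List IFml}
    (hN : ∀ j ∈ N, Admissible Θ (os.length + 1) j ∧ ¬ Sat β c₁ (os' ++ [d₁]) (ST j 1)) :
    ∃ a₁ b₁, relR α a a₁ ∧ relE α a₁ b₁ ∧
      ∀ j ∈ N, ¬ Sat α a₁ (os ++ [b₁]) (ST j 1) := by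
  have hNa := Admissible.idisjL fun j hj => (hN j hj).1
  have hNf : ∀ j ∈ N, FreeOK (os.length + 1) (ST j 1) := fun j hj => (hN j hj).1.2
  have hadm := hNa.all hR hE
  by_contra! hno
  have hs : Sat α a os (ST (.all os.length (idisjL N)) 1) := by
    rw [sat_ST_all hNa.2]
    intro a₁ b₁ hab hb
    exact (sat_ST_idisjL (by simpa using hNf)).2 (hno a₁ b₁ hab hb)
  have hc' := h _ hadm.1 hadm.2 hs
  rw [hlen] at hc' hNf
  obtain ⟨j, hj, hsat⟩ := (sat_ST_idisjL (by simpa using hNf)).1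
    ((sat_ST_all (by simpa [hlen] using hNa.2)).1 hc' c₁ d₁ hc hd)
  exact (hN j hj).2 hsat

theorem ITLe.uni (hR : Sym.R ∈ Θ) (hE : Sym.E ∈ Θ) (hα : CountablySaturated α)
    (hlen : os.length = os'.length) (h : ITLe Θ α a os β c os') {c₁ d₁ : β.D}
    (hc : relR β c c₁) (hd : relE β c₁ d₁) :
    ∃ a₁ b₁, relR α a a₁ ∧ relE α a₁ b₁ ∧
      ITLe Θ α a₁ (os ++ [b₁]) β c₁ (os' ++ [d₁]) := by
  obtain ⟨g, hgV, hg1, hg⟩ := hα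
    {i // Admissible Θ (os.length + 1) i ∧ ¬ Sat β c₁ (os' ++ [d₁]) (ST i 1)}
    (canon α a os) {3, 2 * os.length} ((Fml.atom .R ![1, 3]).conj (.atom .E ![3, 2 * os.length]))
    (fun i => (ST i.1 3).neg) fun S => by
      obtain ⟨a₁, b₁, hab, hb, hN⟩ := h.uni_finite hR hE hlen hc hd
        (N := S.toList.map Subtype.val)
        (by simpa [List.forall_mem_map] using fun _ hp hq _ => ⟨hp, hq⟩)
      have hab₁ := ((assigns_canon α a os).update_world (y := 3) rfl a₁).update_append rfl b₁
      refine ⟨update (update (canon α a os) 3 a₁) (2 * os.length) b₁, fun v hv => ?_, ?_,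
        fun k hk => ?_⟩
      · simp only [Finset.mem_insert, Finset.mem_singleton, not_or] at hv
        rw [update_of_ne hv.2, update_of_ne hv.1]
      · simpa [(assigns_canon α a os).1, update_of_ne (show (3 : ℕ) ≠ 2 * os.length by omega),
          update_of_ne (show (1 : ℕ) ≠ 2 * os.length by omega)] using ⟨hab, hb⟩
      · exact fun he => hN k.1 (by simpa [List.mem_map] using ⟨k.2, hk⟩)
          ((sat_ST_iff_eval hab₁ rfl (by simpa using k.2.1.2)).2 he)
  obtain ⟨a₁, b₁, rfl⟩ :
      ∃ a₁ b₁, g = update (update (canon α a os) 3 a₁) (2 * os.length) b₁ := by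
    refine ⟨g 3, _, eq_update_of_agree fun w hw => ?_⟩
    rcases eq_or_ne w 3 with rfl | h3
    · simp
    · rw [update_of_ne h3, hgV w (by simp_all)]
  have hg' := ((assigns_canon α a os).update_world (y := 3) rfl a₁).update_append rfl b₁
  refine ⟨a₁, b₁, ?_, ?_, fun i hs hf hsat => ?_⟩
  · simpa [(assigns_canon α a os).1, update_of_ne (show (3 : ℕ) ≠ 2 * os.length by omega),
      update_of_ne (show (1 : ℕ) ≠ 2 * os.length by omega)] using hg1.1
  · simpa [update_of_ne (show (3 : ℕ) ≠ 2 * os.length by omega)] using hg1.2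
  · have hf' : FreeOK (os.length + 1) (ST i 1) := by simpa using hf
    by_contra hno
    exact hg ⟨i, ⟨hs, hf'⟩, hno⟩ ((sat_ST_iff_eval hg' rfl hf).1 hsat)

end Asimulation

theorem isAsim_ITLe {Θ : Set Sym} (hR : Sym.R ∈ Θ) (hE : Sym.E ∈ Θ) {M N : Model}
    (hM : CountablySaturated M) (hN : CountablySaturated N) :
    IsAsim Θ M N fun s t a os c os' =>
      os.length = os'.length ∧ ITLe Θ (side M N s) a os (side M N t) c os' := by
  have hsat : ∀ s, CountablySaturated (side M N s) := by
    rintro (_ | _)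
    exacts [hN, hM]
  refine ⟨fun _ _ _ _ _ _ h => h.1, ?_, ?_, ?_, ?_⟩
  · rintro s t a os c os' ⟨hlen, h⟩ P hP hPR hPE ⟨harr, hrel⟩
    cases P with
    | R => exact absurd rfl hPR
    | E => exact absurd rfl hPE
    | P l m =>
      obtain rfl : l = os.length := by simpa [Sym.arity] using harr
      have hadm := admissible_atom (m := m) hP
      exact (sat_ST_atom hlen.symm m).1 (h _ hadm.1 hadm.2 ((sat_ST_atom rfl m).2 ⟨harr, hrel⟩))
  · rintro s t a os c os' ⟨hlen, h⟩ c₁ hc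
    obtain ⟨a₁, hab, h₁, h₂⟩ := h.back hR (hsat s) hlen hc
    exact ⟨a₁, hab, ⟨hlen.symm, h₁⟩, hlen, h₂⟩
  · rintro s t a os c os' ⟨hlen, h⟩ b hb
    obtain ⟨d, hcd, h'⟩ := h.exi hR hE (hsat t) hlen hb
    exact ⟨d, hcd, by simp [hlen], h'⟩
  · rintro s t a os c os' ⟨hlen, h⟩ c₁ d₁ hc hd
    obtain ⟨a₁, b₁, hab, hb, h'⟩ := h.uni hR hE (hsat s) hlen hc hd
    exact ⟨a₁, b₁, hab, hb, by simp [hlen], h'⟩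

theorem assigns_ofFn {α : Model} (f : ℕ → α.D) (n : ℕ) :
    Assigns f 1 (f 1) (List.ofFn fun k : Fin n => f (2 * k)) :=
  ⟨rfl, fun k => by simp⟩

theorem sat_diag_ofFn_iff (N : Model) (U : Ultrafilter ℕ) (g : ℕ → N.D) {n : ℕ} {ψ : Fml}
    (hψ : FreeOK n ψ) :
    Sat (UPow N U) (diag N U (g 1)) ((List.ofFn fun k : Fin n => g (2 * k)).map (diag N U)) ψ ↔
      ψ.eval N g := by
  rw [sat_diag _ _ (by simpa using hψ), sat_iff_eval (assigns_ofFn g n) (by simpa using hψ)]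

theorem exists_model_of_forall_IC {φ : Fml} {n : ℕ} {M : Model} {f : ℕ → M.D}
    (hIC : ∀ ψ ∈ IC φ n, ψ.eval M f) :
    ∃ (M₀ : Model) (f₀ : ℕ → M₀.D), φ.eval M₀ f₀ ∧ ∀ i : IFml, (ST i 1).syms ⊆ sigOf φ →
      FreeOK n (ST i 1) → (ST i 1).eval M₀ f₀ → (ST i 1).eval M f := by
  let ι := {i // Admissible (sigOf φ) n i ∧ ¬ (ST i 1).eval M f}
  by_contra! hno
  -- otherwise `φ` entails a finite disjunction of members of `ι`, which then lies in `IC φ n`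
  obtain ⟨S, hS⟩ := compactness (fun i : ι => (ST i.1 1).neg) φ.neg fun M₀ f₀ h hφ =>
    (hno M₀ f₀ hφ).elim fun i ⟨hs, hf, hi, hni⟩ => h ⟨i, ⟨Finset.coe_subset.2 hs, hf⟩, hni⟩ hi
  let L := S.toList.map Subtype.val
  have hL : ∀ j ∈ L, Admissible (sigOf φ) n j ∧ ¬ (ST j 1).eval M f := by
    simpa [L, List.forall_mem_map] using fun _ hp hq _ => ⟨hp, hq⟩
  have hadm := Admissible.idisjL fun j hj => (hL j hj).1
  have hmem : ST (idisjL L) 1 ∈ IC φ n := by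
    refine ⟨Finset.coe_subset.1 hadm.1, hadm.2, ⟨_, rfl⟩, fun M₀ f₀ hφ => ?_⟩
    by_contra hno
    refine hS M₀ f₀ (fun k hk hk' => hno ((eval_ST_idisjL ..).2 ⟨k.1, ?_, hk'⟩)) hφ
    simpa [L, List.mem_map] using ⟨k.2, hk⟩
  obtain ⟨j, hj, hsat⟩ := (eval_ST_idisjL ..).1 (hIC _ hmem)
  exact (hL j hj).2 hsat

theorem eval_of_forall_IC {φ : Fml} {n : ℕ} (hfree : FreeOK n φ) (hinv : AsimInvariant φ n)
    {M : Model} {f : ℕ → M.D} (hIC : ∀ ψ ∈ IC φ n, ψ.eval M f) : φ.eval M f := by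
  obtain ⟨M₀, f₀, hφ₀, h₀⟩ := exists_model_of_forall_IC hIC
  let U := Filter.hyperfilter ℕ
  have hR : Sym.R ∈ (sigOf φ : Set Sym) := by simp [sigOf]
  have hE : Sym.E ∈ (sigOf φ : Set Sym) := by simp [sigOf]
  have hIT : ITLe (sigOf φ) (UPow M₀ U) (diag M₀ U (f₀ 1))
      ((List.ofFn fun k : Fin n => f₀ (2 * k)).map (diag M₀ U)) (UPow M U) (diag M U (f 1))
      ((List.ofFn fun k : Fin n => f (2 * k)).map (diag M U)) := by
    intro i hs hf
    have hf' : FreeOK n (ST i 1) := by simpa using hf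
    rw [sat_diag_ofFn_iff _ _ _ hf', sat_diag_ofFn_iff _ _ _ hf']
    exact h₀ i (Finset.coe_subset.1 hs) hf'
  have hA := isAsim_ITLe hR hE (countablySaturated_upow M₀) (countablySaturated_upow M)
  exact (sat_diag_ofFn_iff M U f hfree).1 <| hinv _ subset_rfl _ _ _ _ _ _ (by simp) (by simp)
    ⟨_, hA, by dsimp only [side]; simp, hIT⟩ ((sat_diag_ofFn_iff M₀ U f₀ hfree).2 hφ₀)

/-- asimulation invariance implies equivalence to a standard
x-translation of an intuitionistic formula. -/
theorem equiv_ST_of_asim_invariant (φ : Fml) (n : ℕ) (hfree : FreeOK n φ)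
    (hinv : AsimInvariant φ n) : ∃ i : IFml, FmlEquiv φ (ST i 1) := by
  obtain ⟨S, hS⟩ := compactness (fun i : {i // ST i 1 ∈ IC φ n} => ST i.1 1) φ
    fun M f h => eval_of_forall_IC hfree hinv fun ψ hψ => by
      obtain ⟨i, rfl⟩ := hψ.2.2.1
      exact h ⟨i, hψ⟩
  refine ⟨iconjL (S.toList.map Subtype.val), fun M f => ?_⟩
  rw [eval_ST_iconjL, List.forall_mem_map]
  exact ⟨fun hφ k _ => k.2.2.2.2 M f hφ,
    fun h => hS M f fun k hk => h k (Finset.mem_toList.2 hk)⟩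

end IPC
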